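/- arXiv:1406.6971 — 2 statements merged into one kernel-verified Lean document; each statement's English description precedes it below -/
import Mathlib

section
/- Let (S_n) be a random walk with i.i.d. increments X_i satisfying E[|X_1|^b] < ∞ for some b > 1, and let m = E[X_1]. Then there exists a constant K = K_b > 0 such that for all n ≥ 1, all y ≥ n^{max(1/b,1/2)} and all x > 0: P(S_n − m·n ≤ −x, min_{1≤i≤n} X_i ≥ −y) ≤ K e^{−x/y}. -/
/-!
Chernoff bound with a truncated exponential tilt: apply Markov's inequality to
`∏ i < n, exp (-X i / y) · 1{X i ≥ -y}`, which equals `exp (-S_n / y)` on the event.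
For `u ≥ -1` and `p = min b 2 ∈ [1, 2]` one has `exp (-u) ≤ 1 - u + |u| ^ p`, so with `u = X / y`
each factor has mean at most `1 - m / y + E|X|^p / y^p`. The constraint on `y` gives `y^p ≥ n`,
hence the `n`-th power of `exp (m / y)` times this mean stays below `exp (exp |m| · E|X|^p)`.
-/

open MeasureTheory ProbabilityTheory Real

lemma exp_neg_le_one_sub_add_abs_rpow {p u : ℝ} (hp1 : 1 ≤ p) (hp2 : p ≤ 2) (hu : -1 ≤ u) :
    exp (-u) ≤ 1 - u + |u| ^ p := by
  rcases le_or_gt u 1 with hu1 | hu1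
  · have habs : |u| ≤ 1 := abs_le.2 ⟨hu, hu1⟩
    have htaylor : exp (-u) ≤ 1 - u + u ^ 2 * (3 / 4) := by
      have h := Real.exp_bound (x := -u) (n := 2) (by rwa [abs_neg]) (by norm_num)
      norm_num [Finset.sum_range_succ, Nat.factorial, abs_neg] at h
      linarith [(abs_le.1 h).2, sq_abs u]
    have hsq : |u| ^ (2 : ℝ) ≤ |u| ^ p := Real.rpow_le_rpow_of_exponent_ge' (abs_nonneg u) habs
      (by linarith) hp2
    rw [Real.rpow_two, sq_abs] at hsq
    nlinarith [sq_nonneg u]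
  · have hexp : exp (-u) ≤ 1 := Real.exp_le_one_iff.2 (by linarith)
    have hpow : u ≤ |u| ^ p := by
      calc u = |u| ^ (1 : ℝ) := by rw [Real.rpow_one, abs_of_pos (by linarith)]
        _ ≤ |u| ^ p := Real.rpow_le_rpow_of_exponent_le (by rw [abs_of_pos] <;> linarith) hp1
    linarith

lemma pow_le_exp_of_le_one_add_div {a A : ℝ} {n : ℕ} (ha : 0 ≤ a) (hA : 0 ≤ A)
    (h : a ≤ 1 + A / n) : a ^ n ≤ exp A := by
  calc a ^ n ≤ (1 - -A / n) ^ n := pow_le_pow_left₀ ha (by rwa [neg_div, sub_neg_eq_add]) n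
    _ ≤ exp (- -A) := one_sub_div_pow_le_exp_neg (by linarith [n.cast_nonneg (α := ℝ)])
    _ = exp A := by rw [neg_neg]

lemma exp_div_mul_one_sub_div_add_le {m y c : ℝ} (hy : 1 ≤ y) (hc : 0 ≤ c) :
    exp (m / y) * (1 - m / y + c) ≤ 1 + exp |m| * c := by
  have htilt : exp (m / y) * (1 - m / y) ≤ 1 := by
    calc exp (m / y) * (1 - m / y) ≤ exp (m / y) * exp (-(m / y)) := by
          gcongr; linarith [Real.add_one_le_exp (-(m / y))]
      _ = 1 := by rw [← Real.exp_add, add_neg_cancel, Real.exp_zero]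
  have hm : m / y ≤ |m| := by
    rw [div_le_iff₀ (by linarith)]
    nlinarith [le_abs_self m, abs_nonneg m]
  nlinarith [Real.exp_le_exp.2 hm, Real.exp_pos (m / y)]

lemma le_rpow_min_of_rpow_max_inv_le {b t y : ℝ} (hb : 0 < b) (ht : 1 ≤ t)
    (hy : t ^ max (1 / b) (1 / 2) ≤ y) : t ≤ y ^ min b 2 := by
  have hexp : 1 ≤ max (1 / b) (1 / 2) * min b 2 := by
    rcases le_total b 2 with hb2 | hb2
    · rw [min_eq_left hb2]
      calc (1 : ℝ) = 1 / b * b := by field_simp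
        _ ≤ _ := by gcongr; exact le_max_left _ _
    · rw [min_eq_right hb2]
      calc (1 : ℝ) = 1 / 2 * 2 := by norm_num
        _ ≤ _ := by gcongr; exact le_max_right _ _
  calc t = t ^ (1 : ℝ) := (Real.rpow_one t).symm
    _ ≤ t ^ (max (1 / b) (1 / 2) * min b 2) := Real.rpow_le_rpow_of_exponent_le ht hexp
    _ = (t ^ max (1 / b) (1 / 2)) ^ min b 2 := Real.rpow_mul (by linarith) _ _
    _ ≤ y ^ min b 2 := by gcongr

noncomputable def truncExp (y v : ℝ) : ℝ := if -y ≤ v then exp (-v / y) else 0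

lemma truncExp_nonneg (y v : ℝ) : 0 ≤ truncExp y v := by
  unfold truncExp; split_ifs <;> positivity

lemma truncExp_le_exp_one {y : ℝ} (hy : 0 < y) (v : ℝ) : truncExp y v ≤ exp 1 := by
  unfold truncExp
  split_ifs with hv
  · exact Real.exp_le_exp.2 ((div_le_one hy).2 (by linarith))
  · positivity

lemma measurable_truncExp (y : ℝ) : Measurable (truncExp y) :=
  Measurable.ite (measurableSet_le measurable_const measurable_id)
    (measurable_id.neg.div_const y).exp measurable_const

lemma truncExp_le_one_sub_div_add_abs_rpow_div {p y : ℝ} (hp1 : 1 ≤ p) (hp2 : p ≤ 2)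
    (hy : 0 < y) (v : ℝ) : truncExp y v ≤ 1 - v / y + |v| ^ p / y ^ p := by
  have habs : |v| ^ p / y ^ p = |v / y| ^ p := by
    rw [abs_div, abs_of_pos hy, Real.div_rpow (abs_nonneg v) hy.le]
  rw [habs]
  unfold truncExp
  split_ifs with hv
  · rw [neg_div]
    exact exp_neg_le_one_sub_add_abs_rpow hp1 hp2 ((le_div_iff₀ hy).2 (by linarith))
  · have : v / y < -1 := (div_lt_iff₀ hy).2 (by linarith)
    linarith [Real.rpow_nonneg (abs_nonneg (v / y)) p]

lemma integrable_truncExp_comp {Ω : Type*} [MeasurableSpace Ω] {μ : Measure Ω}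
    [IsFiniteMeasure μ] {Z : Ω → ℝ} (hZ : Measurable Z) {y : ℝ} (hy : 0 < y) :
    Integrable (fun ω => truncExp y (Z ω)) μ :=
  (integrable_const (exp 1)).mono' ((measurable_truncExp y).comp hZ).aestronglyMeasurable
    (ae_of_all _ fun ω => by
      rw [Real.norm_of_nonneg (truncExp_nonneg _ _)]; exact truncExp_le_exp_one hy _)

lemma integral_truncExp_comp_le {Ω : Type*} [MeasurableSpace Ω] {μ : Measure Ω}
    [IsProbabilityMeasure μ] {Z : Ω → ℝ} (hZ : Measurable Z) (hZint : Integrable Z μ)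
    {p y : ℝ} (hp1 : 1 ≤ p) (hp2 : p ≤ 2) (hZp : Integrable (fun ω => |Z ω| ^ p) μ)
    (hy : 0 < y) :
    ∫ ω, truncExp y (Z ω) ∂μ ≤ 1 - μ[Z] / y + (∫ ω, |Z ω| ^ p ∂μ) / y ^ p := by
  have hlin : Integrable (fun ω => 1 - Z ω / y) μ := (integrable_const 1).sub (hZint.div_const y)
  calc ∫ ω, truncExp y (Z ω) ∂μ ≤ ∫ ω, (1 - Z ω / y + |Z ω| ^ p / y ^ p) ∂μ :=
        integral_mono (integrable_truncExp_comp hZ hy) (hlin.add (hZp.div_const _))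
          fun ω => truncExp_le_one_sub_div_add_abs_rpow_div hp1 hp2 hy (Z ω)
    _ = 1 - μ[Z] / y + (∫ ω, |Z ω| ^ p ∂μ) / y ^ p := by
      rw [integral_add hlin (hZp.div_const _),
        integral_sub (integrable_const 1) (hZint.div_const y), integral_div, integral_div,
        integral_const]
      simp

lemma integral_prod_range_comp_eq_pow {Ω : Type*} [MeasurableSpace Ω] {μ : Measure Ω}
    {X : ℕ → Ω → ℝ} (hmeas : ∀ i, Measurable (X i)) (hindep : iIndepFun X μ)
    (hident : ∀ i, μ.map (X i) = μ.map (X 0)) {f : ℝ → ℝ} (hf : Measurable f) (n : ℕ) :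
    ∫ ω, ∏ i ∈ Finset.range n, f (X i ω) ∂μ = (∫ ω, f (X 0 ω) ∂μ) ^ n := by
  have hsame (i : ℕ) : ∫ ω, f (X i ω) ∂μ = ∫ ω, f (X 0 ω) ∂μ := by
    rw [← integral_map (hmeas i).aemeasurable hf.aestronglyMeasurable, hident i,
      integral_map (hmeas 0).aemeasurable hf.aestronglyMeasurable]
  simp_rw [Finset.prod_range fun i => f (X i _)]
  rw [(hindep.precomp Fin.val_injective).integral_fun_prod_comp (fun i => (hmeas i).aemeasurable)
    fun _ => hf.aestronglyMeasurable]
  simp [hsame]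

lemma measure_le_ofReal_integral_div_of_subset {Ω : Type*} [MeasurableSpace Ω] {μ : Measure Ω}
    [IsFiniteMeasure μ] {f : Ω → ℝ} (hf0 : 0 ≤ᵐ[μ] f) (hfint : Integrable f μ) {ε : ℝ}
    (hε : 0 < ε) {E : Set Ω} (hE : E ⊆ {ω | ε ≤ f ω}) :
    μ E ≤ ENNReal.ofReal ((∫ ω, f ω ∂μ) / ε) :=
  calc μ E ≤ μ {ω | ε ≤ f ω} := measure_mono hE
    _ = ENNReal.ofReal (μ.real {ω | ε ≤ f ω}) := (ofReal_measureReal).symm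
    _ ≤ _ := ENNReal.ofReal_le_ofReal <| (le_div_iff₀ hε).2 <| by
      linarith [mul_meas_ge_le_integral_of_nonneg hf0 hfint ε]

lemma measure_sum_sub_le_neg_and_forall_ge_le {Ω : Type*} [MeasurableSpace Ω]
    {μ : Measure Ω} [IsProbabilityMeasure μ] {X : ℕ → Ω → ℝ} (hmeas : ∀ i, Measurable (X i))
    (hindep : iIndepFun X μ) (hident : ∀ i, μ.map (X i) = μ.map (X 0)) {y : ℝ} (hy : 0 < y)
    (m x : ℝ) (n : ℕ) :
    μ {ω | (∑ i ∈ Finset.range n, X i ω) - m * n ≤ -x ∧ ∀ i < n, -y ≤ X i ω}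
      ≤ ENNReal.ofReal ((exp (m / y) * ∫ ω, truncExp y (X 0 ω) ∂μ) ^ n * exp (-x / y)) := by
  set f : Ω → ℝ := fun ω => ∏ i ∈ Finset.range n, truncExp y (X i ω)
  have hf0 (ω : Ω) : 0 ≤ f ω := Finset.prod_nonneg fun i _ => truncExp_nonneg _ _
  have hfint : Integrable f μ := by
    have hmeas_f : Measurable f :=
      Finset.measurable_fun_prod _ fun i _ => (measurable_truncExp y).comp (hmeas i)
    refine Integrable.of_bound hmeas_f.aestronglyMeasurable (exp 1 ^ n) (ae_of_all _ fun ω => ?_)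
    rw [Real.norm_of_nonneg (hf0 ω), ← Finset.card_range n, ← Finset.prod_const]
    exact Finset.prod_le_prod (fun i _ => truncExp_nonneg _ _)
      fun i _ => truncExp_le_exp_one hy _
  have hE : {ω | (∑ i ∈ Finset.range n, X i ω) - m * n ≤ -x ∧ ∀ i < n, -y ≤ X i ω}
      ⊆ {ω | exp ((x - m * n) / y) ≤ f ω} := by
    rintro ω ⟨hsum, hcut⟩
    have hf : f ω = exp (-(∑ i ∈ Finset.range n, X i ω) / y) := by
      rw [neg_div, Finset.sum_div, ← Finset.sum_neg_distrib, Real.exp_sum]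
      refine Finset.prod_congr rfl fun i hi => ?_
      rw [truncExp, if_pos (hcut i (Finset.mem_range.1 hi)), neg_div]
    change _ ≤ f ω
    rw [hf]
    gcongr
    linarith
  refine (measure_le_ofReal_integral_div_of_subset (ae_of_all _ hf0) hfint (exp_pos _) hE).trans
    (le_of_eq ?_)
  rw [integral_prod_range_comp_eq_pow hmeas hindep hident (measurable_truncExp y), mul_pow,
    ← Real.exp_nat_mul, div_eq_mul_inv, ← Real.exp_neg, mul_comm (exp _), mul_assoc,
    ← Real.exp_add]
  congr 3
  field_simp
  ring

/-- Lemma 2.1(a) of Denisov–Dieker–Shneer: for a random walk with i.i.d.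
increments having finite `b`-th absolute moment (`b > 1`) and mean `m`, there is `K > 0`
such that for all `n ≥ 1`, `y ≥ n^{max(1/b,1/2)}` and `x > 0`,
`P(S_n − m n ≤ −x, min_{1≤i≤n} X_i ≥ −y) ≤ K e^{−x/y}`. -/
theorem rw_lower_deviation_no_big_drop
    {Ω : Type*} [MeasurableSpace Ω] (μ : Measure Ω) [IsProbabilityMeasure μ]
    (X : ℕ → Ω → ℝ)
    (hmeas : ∀ i, Measurable (X i))
    (hindep : iIndepFun X μ)
    (hident : ∀ i, μ.map (X i) = μ.map (X 0))
    (b : ℝ) (hb : 1 < b)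
    (hmom : Integrable (fun ω => |X 0 ω| ^ b) μ)
    (m : ℝ) (hm : m = μ[X 0]) :
    ∃ K > 0, ∀ n : ℕ, 1 ≤ n → ∀ y : ℝ, (n : ℝ) ^ (max (1 / b) (1 / 2)) ≤ y →
      ∀ x : ℝ, 0 < x →
      μ {ω | (∑ i ∈ Finset.range n, X i ω) - m * n ≤ -x ∧ ∀ i < n, -y ≤ X i ω}
        ≤ ENNReal.ofReal (K * Real.exp (-x / y)) := by
  set p := min b 2
  have hp1 : 1 ≤ p := le_min hb.le one_le_two
  have hmoment {q : ℝ} (hq : 0 ≤ q) (hqb : q ≤ b) : Integrable (fun ω => |X 0 ω| ^ q) μ := by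
    simpa only [Real.norm_eq_abs] using integrable_norm_rpow_of_le (hmeas 0).aestronglyMeasurable
      hq (by linarith) hqb (by simpa only [Real.norm_eq_abs] using hmom)
  have hint : Integrable (X 0) μ := (integrable_norm_iff (hmeas 0).aestronglyMeasurable).1 <| by
    simpa only [Real.norm_eq_abs, Real.rpow_one] using hmoment zero_le_one hb.le
  set C := ∫ ω, |X 0 ω| ^ p ∂μ
  have hC : 0 ≤ C := integral_nonneg fun ω => by positivity
  refine ⟨exp (exp |m| * C), exp_pos _, fun n hn y hy x _ => ?_⟩
  have hn1 : (1 : ℝ) ≤ n := by exact_mod_cast hn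
  have hy1 : 1 ≤ y := (Real.one_le_rpow hn1 (by positivity)).trans hy
  have hny : (n : ℝ) ≤ y ^ p := le_rpow_min_of_rpow_max_inv_le (by linarith) hn1 hy
  have hI : ∫ ω, truncExp y (X 0 ω) ∂μ ≤ 1 - m / y + C / y ^ p := by
    rw [hm]
    exact integral_truncExp_comp_le (hmeas 0) hint hp1 (min_le_right _ _)
      (hmoment (by linarith) (min_le_left _ _)) (by linarith)
  have htilt : exp (m / y) * ∫ ω, truncExp y (X 0 ω) ∂μ ≤ 1 + exp |m| * C / n :=
    calc exp (m / y) * ∫ ω, truncExp y (X 0 ω) ∂μ ≤ exp (m / y) * (1 - m / y + C / y ^ p) := by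
          gcongr
      _ ≤ 1 + exp |m| * (C / y ^ p) := exp_div_mul_one_sub_div_add_le hy1 (by positivity)
      _ ≤ 1 + exp |m| * C / n := by
          rw [mul_div_assoc]; gcongr
  refine (measure_sum_sub_le_neg_and_forall_ge_le hmeas hindep hident (by linarith) m x n).trans
    (ENNReal.ofReal_le_ofReal ?_)
  gcongr
  exact pow_le_exp_of_le_one_add_div
    (mul_nonneg (exp_pos _).le (integral_nonneg fun _ => truncExp_nonneg _ _)) (by positivity) htilt
end

section
/- Let (S_n) be a random walk with i.i.d. increments X_i satisfying E[|X_1|^b] < ∞ for some b > 1, and let m = E[X_1]. Then there exists a constant K > 0 such that for all n ≥ 1, all y ≥ n^{max(1/b,1/2)} and all x > 0: P(|S_n − m·n| ≥ x, max_{1≤i≤n} |X_i| ≤ y) ≤ K e^{−x/y}. -/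
open MeasureTheory ProbabilityTheory Real

/-!
Truncate every increment at level `y`. On the event `max |X_i| ≤ y` the walk coincides with the
truncated walk, so it suffices to bound both tails of the latter by Chernoff's inequality with
`s = ±1/y`. As `|s X̃| ≤ 1`, `exp (s X̃) ≤ 1 + s X̃ + (s X̃)²`; the truncation error `s E[X - X̃]`
is at most `E|X|^b / y^b`, and `E (s X̃)² ≤ E|X|^q / y^q` with `q = min b 2`. The condition
`y ≥ n^{max(1/b, 1/2)}` says exactly `y^b ≥ n` and `y^q ≥ n`, so
`E exp (s X̃) ≤ exp (s m + A / n)` with `A = E|X|^b + E|X|^q`, and by independence the `n`-fold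
product is at most `exp (s m n + A)`.
-/

/-- Unlike `ProbabilityTheory.truncation`, which keeps `Set.Ioc (-y) y`, this keeps `-y` as well,
so it fixes every `v` with `|v| ≤ y`. -/
noncomputable def truncateAbs (y v : ℝ) : ℝ := if |v| ≤ y then v else 0

lemma measurable_truncateAbs (y : ℝ) : Measurable (truncateAbs y) :=
  Measurable.ite (measurableSet_le measurable_abs measurable_const) measurable_id measurable_const

lemma truncateAbs_of_abs_le {y v : ℝ} (h : |v| ≤ y) : truncateAbs y v = v := if_pos h

lemma abs_truncateAbs_le {y : ℝ} (v : ℝ) (hy : 0 ≤ y) : |truncateAbs y v| ≤ y := by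
  unfold truncateAbs; split_ifs with h
  · exact h
  · simpa using hy

lemma abs_truncateAbs_le_abs (y v : ℝ) : |truncateAbs y v| ≤ |v| := by
  unfold truncateAbs; split_ifs <;> simp

lemma abs_sub_truncateAbs_div_le {y b : ℝ} (v : ℝ) (hy : 0 < y) (hb : 1 ≤ b) :
    |v - truncateAbs y v| / y ≤ |v| ^ b / y ^ b := by
  unfold truncateAbs
  split_ifs with h
  · simp only [sub_self, abs_zero, zero_div]; positivity
  · have hvy : 1 ≤ |v| / y := by rw [one_le_div hy]; exact (not_le.1 h).le
    calc |v - 0| / y = (|v| / y) ^ (1 : ℝ) := by rw [sub_zero, rpow_one]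
      _ ≤ (|v| / y) ^ b := rpow_le_rpow_of_exponent_le hvy hb
      _ = |v| ^ b / y ^ b := div_rpow (abs_nonneg v) hy.le b

lemma sq_truncateAbs_div_le {y q : ℝ} (v : ℝ) (hy : 0 < y) (hq0 : 0 ≤ q) (hq2 : q ≤ 2) :
    (truncateAbs y v / y) ^ 2 ≤ |v| ^ q / y ^ q := by
  have h1 : |truncateAbs y v / y| ≤ 1 := by
    rw [abs_div, abs_of_pos hy, div_le_one hy]; exact abs_truncateAbs_le v hy.le
  calc (truncateAbs y v / y) ^ 2 = |truncateAbs y v / y| ^ (2 : ℝ) := by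
        rw [rpow_two, sq_abs]
    _ ≤ |truncateAbs y v / y| ^ q := rpow_le_rpow_of_exponent_ge' (abs_nonneg _) h1 hq0 hq2
    _ ≤ (|v| / y) ^ q := by
        rw [abs_div, abs_of_pos hy]
        exact rpow_le_rpow (by positivity)
          (div_le_div_of_nonneg_right (abs_truncateAbs_le_abs y v) hy.le) hq0
    _ = |v| ^ q / y ^ q := div_rpow (abs_nonneg v) hy.le q

lemma exp_mul_truncateAbs_le {y s b q : ℝ} (v : ℝ) (hy : 0 < y) (hs : |s| ≤ y⁻¹)
    (hb : 1 ≤ b) (hq0 : 0 ≤ q) (hq2 : q ≤ 2) :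
    exp (s * truncateAbs y v) ≤ 1 + s * v + |v| ^ b / y ^ b + |v| ^ q / y ^ q := by
  set w := s * truncateAbs y v
  have hw : |w| ≤ 1 := by
    calc |w| = |s| * |truncateAbs y v| := abs_mul _ _
      _ ≤ y⁻¹ * y := by gcongr; exact abs_truncateAbs_le v hy.le
      _ = 1 := inv_mul_cancel₀ hy.ne'
  have hw_sq : w ^ 2 ≤ |v| ^ q / y ^ q :=
    calc w ^ 2 = |s| ^ 2 * truncateAbs y v ^ 2 := by rw [sq_abs, mul_pow]
      _ ≤ y⁻¹ ^ 2 * truncateAbs y v ^ 2 := by gcongr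
      _ = (truncateAbs y v / y) ^ 2 := by ring
      _ ≤ |v| ^ q / y ^ q := sq_truncateAbs_div_le v hy hq0 hq2
  have hw_lin : w ≤ s * v + |v| ^ b / y ^ b :=
    calc w = s * v - s * (v - truncateAbs y v) := by ring
      _ ≤ s * v + |s| * |v - truncateAbs y v| := by
          rw [← abs_mul]; linarith [neg_abs_le (s * (v - truncateAbs y v))]
      _ ≤ s * v + y⁻¹ * |v - truncateAbs y v| := by gcongr
      _ = s * v + |v - truncateAbs y v| / y := by ring
      _ ≤ s * v + |v| ^ b / y ^ b := by linarith [abs_sub_truncateAbs_div_le v hy hb]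
  linarith [(abs_le.1 (abs_exp_sub_one_sub_id_le hw)).2]

lemma le_rpow_of_rpow_le {n y p r : ℝ} (hn : 1 ≤ n) (hp : 0 < p) (hpr : p⁻¹ ≤ r)
    (hy : n ^ r ≤ y) : n ≤ y ^ p :=
  calc n = (n ^ p⁻¹) ^ p := (rpow_inv_rpow (by linarith) hp.ne').symm
    _ ≤ (n ^ r) ^ p := by gcongr
    _ ≤ y ^ p := by gcongr

section

variable {Ω : Type*} [MeasurableSpace Ω] {μ : Measure Ω} {Z : Ω → ℝ} {y : ℝ}

lemma integrable_exp_mul_truncateAbs [IsFiniteMeasure μ] (hZ : Measurable Z) (hy : 0 ≤ y)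
    (s : ℝ) : Integrable (fun ω => exp (s * truncateAbs y (Z ω))) μ := by
  refine .of_bound (((measurable_truncateAbs y).comp hZ).const_mul s).exp.aestronglyMeasurable
    (exp (|s| * y)) (ae_of_all _ fun ω => ?_)
  rw [norm_of_nonneg (exp_pos _).le, exp_le_exp]
  calc s * truncateAbs y (Z ω) ≤ |s| * |truncateAbs y (Z ω)| := by
        rw [← abs_mul]; exact le_abs_self _
    _ ≤ |s| * y := by gcongr; exact abs_truncateAbs_le _ hy

lemma integrable_abs_rpow_of_le [IsFiniteMeasure μ] (hZ : AEStronglyMeasurable Z μ) {b q : ℝ}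
    (hq : 0 ≤ q) (hqb : q ≤ b) (hmom : Integrable (fun ω => |Z ω| ^ b) μ) :
    Integrable (fun ω => |Z ω| ^ q) μ := by
  simp_rw [← Real.norm_eq_abs] at hmom ⊢
  exact integrable_norm_rpow_of_le hZ hq (hq.trans hqb) hqb hmom

lemma mgf_truncateAbs_le [IsProbabilityMeasure μ] (hZ : Measurable Z) {s b q : ℝ} (hy : 0 < y)
    (hs : |s| ≤ y⁻¹) (hb : 1 ≤ b) (hq0 : 0 ≤ q) (hq2 : q ≤ 2) (hqb : q ≤ b)
    (hmom : Integrable (fun ω => |Z ω| ^ b) μ) :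
    mgf (fun ω => truncateAbs y (Z ω)) μ s ≤
      exp (s * μ[Z] + μ[fun ω => |Z ω| ^ b] / y ^ b + μ[fun ω => |Z ω| ^ q] / y ^ q) := by
  have hZ1 : Integrable Z μ := by
    have := integrable_abs_rpow_of_le hZ.aestronglyMeasurable zero_le_one hb hmom
    simp only [rpow_one] at this
    exact (integrable_norm_iff hZ.aestronglyMeasurable).1 this
  have hZq := integrable_abs_rpow_of_le hZ.aestronglyMeasurable hq0 hqb hmom
  calc mgf (fun ω => truncateAbs y (Z ω)) μ s
      ≤ μ[fun ω => 1 + s * Z ω + |Z ω| ^ b / y ^ b + |Z ω| ^ q / y ^ q] :=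
        integral_mono (integrable_exp_mul_truncateAbs hZ hy.le s)
          ((((integrable_const 1).add (hZ1.const_mul s)).add (hmom.div_const _)).add
            (hZq.div_const _))
          fun ω => exp_mul_truncateAbs_le (Z ω) hy hs hb hq0 hq2
    _ = 1 + (s * μ[Z] + μ[fun ω => |Z ω| ^ b] / y ^ b + μ[fun ω => |Z ω| ^ q] / y ^ q) := by
        rw [integral_add, integral_add, integral_add, integral_const, integral_const_mul,
          integral_div, integral_div]
        · simp only [probReal_univ, smul_eq_mul, mul_one]; ring
        all_goals fun_prop
    _ ≤ _ := by rw [add_comm]; exact add_one_le_exp _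

lemma measure_le_abs_sub_le_of_mgf_le [IsFiniteMeasure μ] {Y : Ω → ℝ} {a t C : ℝ} (x : ℝ)
    (ht : 0 ≤ t) (hint : ∀ s, |s| = t → Integrable (fun ω => exp (s * Y ω)) μ)
    (hmgf : ∀ s, |s| = t → mgf Y μ s ≤ exp (s * a + C)) :
    μ {ω | x ≤ |Y ω - a|} ≤ ENNReal.ofReal (2 * exp C * exp (-t * x)) := by
  have hpos : |t| = t := abs_of_nonneg ht
  have hneg : |-t| = t := by rw [abs_neg, hpos]
  have upper : μ.real {ω | a + x ≤ Y ω} ≤ exp C * exp (-t * x) :=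
    calc μ.real {ω | a + x ≤ Y ω} ≤ exp (-t * (a + x)) * mgf Y μ t :=
          measure_ge_le_exp_mul_mgf _ ht (hint t hpos)
      _ ≤ exp (-t * (a + x)) * exp (t * a + C) := by gcongr; exact hmgf t hpos
      _ = exp C * exp (-t * x) := by rw [← exp_add, ← exp_add]; ring_nf
  have lower : μ.real {ω | Y ω ≤ a - x} ≤ exp C * exp (-t * x) :=
    calc μ.real {ω | Y ω ≤ a - x} ≤ exp (- -t * (a - x)) * mgf Y μ (-t) :=
          measure_le_le_exp_mul_mgf _ (neg_nonpos.2 ht) (hint (-t) hneg)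
      _ ≤ exp (- -t * (a - x)) * exp (-t * a + C) := by gcongr; exact hmgf (-t) hneg
      _ = exp C * exp (-t * x) := by rw [← exp_add, ← exp_add]; ring_nf
  have hsplit : {ω | x ≤ |Y ω - a|} ⊆ {ω | a + x ≤ Y ω} ∪ {ω | Y ω ≤ a - x} := by
    intro ω hω
    rcases le_abs'.1 (show x ≤ |Y ω - a| from hω) with h | h
    · right; simp only [Set.mem_ofPred_eq]; linarith
    · left; simp only [Set.mem_ofPred_eq]; linarith
  rw [ENNReal.le_ofReal_iff_toReal_le (measure_ne_top _ _) (by positivity)]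
  calc μ.real {ω | x ≤ |Y ω - a|}
      ≤ μ.real {ω | a + x ≤ Y ω} + μ.real {ω | Y ω ≤ a - x} :=
        (measureReal_mono hsplit).trans (measureReal_union_le _ _)
    _ ≤ 2 * exp C * exp (-t * x) := by linarith

lemma mgf_sum_truncateAbs_le [IsProbabilityMeasure μ] {X : ℕ → Ω → ℝ}
    (hmeas : ∀ i, Measurable (X i)) (hindep : iIndepFun X μ)
    (hident : ∀ i, μ.map (X i) = μ.map (X 0)) {b : ℝ} (hb : 1 ≤ b)
    (hmom : Integrable (fun ω => |X 0 ω| ^ b) μ) {n : ℕ} (hn : 0 < n) (hy : 0 < y)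
    (hyb : (n : ℝ) ≤ y ^ b) (hyq : (n : ℝ) ≤ y ^ min b 2) {s : ℝ} (hs : |s| ≤ y⁻¹) :
    mgf (∑ i ∈ Finset.range n, truncateAbs y ∘ X i) μ s ≤
      exp (s * (μ[X 0] * n) + (μ[fun ω => |X 0 ω| ^ b] + μ[fun ω => |X 0 ω| ^ min b 2])) := by
  set A := μ[fun ω => |X 0 ω| ^ b] + μ[fun ω => |X 0 ω| ^ min b 2]
  have hmgf_one (i : ℕ) : mgf (truncateAbs y ∘ X i) μ s ≤ exp (s * μ[X 0] + A / n) := by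
    have hident_i : IdentDistrib (X i) (X 0) μ μ :=
      ⟨(hmeas i).aemeasurable, (hmeas 0).aemeasurable, hident i⟩
    rw [mgf_congr_of_identDistrib _ _ (hident_i.comp (measurable_truncateAbs y))]
    refine (mgf_truncateAbs_le (hmeas 0) hy hs hb (by positivity) (min_le_right _ _)
      (min_le_left _ _) hmom).trans (exp_le_exp.2 ?_)
    rw [add_div, ← add_assoc]
    gcongr
  rw [(hindep.comp _ fun _ => measurable_truncateAbs y).mgf_sum
    fun i => (measurable_truncateAbs y).comp (hmeas i)]
  calc ∏ i ∈ Finset.range n, mgf (truncateAbs y ∘ X i) μ s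
      ≤ ∏ i ∈ Finset.range n, exp (s * μ[X 0] + A / n) :=
        Finset.prod_le_prod (fun _ _ => mgf_nonneg) fun i _ => hmgf_one i
    _ = exp (s * (μ[X 0] * n) + A) := by
        rw [Finset.prod_const, Finset.card_range, ← exp_nat_mul]
        field_simp

end


/-- Lemma 2.1(b) of Denisov–Dieker–Shneer: for a random walk with i.i.d.
increments having finite `b`-th absolute moment (`b > 1`) and mean `m`, there is `K > 0`
such that for all `n ≥ 1`, `y ≥ n^{max(1/b,1/2)}` and `x > 0`,
`P(|S_n − m n| ≥ x, max_{1≤i≤n} |X_i| ≤ y) ≤ K e^{−x/y}`. -/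
theorem rw_deviation_bounded_increments
    {Ω : Type*} [MeasurableSpace Ω] (μ : Measure Ω) [IsProbabilityMeasure μ]
    (X : ℕ → Ω → ℝ)
    (hmeas : ∀ i, Measurable (X i))
    (hindep : iIndepFun X μ)
    (hident : ∀ i, μ.map (X i) = μ.map (X 0))
    (b : ℝ) (hb : 1 < b)
    (hmom : Integrable (fun ω => |X 0 ω| ^ b) μ)
    (m : ℝ) (hm : m = μ[X 0]) :
    ∃ K > 0, ∀ n : ℕ, 1 ≤ n → ∀ y : ℝ, (n : ℝ) ^ (max (1 / b) (1 / 2)) ≤ y →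
      ∀ x : ℝ, 0 < x →
      μ {ω | x ≤ |(∑ i ∈ Finset.range n, X i ω) - m * n| ∧ ∀ i < n, |X i ω| ≤ y}
        ≤ ENNReal.ofReal (K * Real.exp (-x / y)) := by
  set A := μ[fun ω => |X 0 ω| ^ b] + μ[fun ω => |X 0 ω| ^ min b 2]
  refine ⟨2 * exp A, by positivity, fun n hn y hy x _ => ?_⟩
  have hn1 : (1 : ℝ) ≤ n := by exact_mod_cast hn
  have hy0 : 0 < y := (rpow_pos_of_pos (by positivity) _).trans_le hy
  have hyb : (n : ℝ) ≤ y ^ b := le_rpow_of_rpow_le hn1 (by linarith) (by simp) hy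
  have hyq : (n : ℝ) ≤ y ^ min b 2 := le_rpow_of_rpow_le hn1 (by positivity)
    (by rcases min_choice b 2 with h | h <;> rw [h] <;> simp) hy
  set S := ∑ i ∈ Finset.range n, truncateAbs y ∘ X i
  have hsub : {ω | x ≤ |(∑ i ∈ Finset.range n, X i ω) - m * n| ∧ ∀ i < n, |X i ω| ≤ y}
      ⊆ {ω | x ≤ |S ω - m * n|} := by
    rintro ω ⟨hdev, hsmall⟩
    simp only [Set.mem_ofPred_eq, S, Finset.sum_apply, Function.comp_apply]
    rwa [Finset.sum_congr rfl fun i hi =>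
      truncateAbs_of_abs_le (hsmall i (Finset.mem_range.1 hi))]
  have hint (s : ℝ) : Integrable (fun ω => exp (s * S ω)) μ :=
    (hindep.comp _ fun _ => measurable_truncateAbs y).integrable_exp_mul_sum
      (fun i => (measurable_truncateAbs y).comp (hmeas i))
      fun i _ => integrable_exp_mul_truncateAbs (hmeas i) hy0.le s
  calc _ ≤ _ := measure_mono hsub
    _ ≤ ENNReal.ofReal (2 * exp A * exp (-y⁻¹ * x)) :=
        measure_le_abs_sub_le_of_mgf_le x (by positivity) (fun s _ => hint s) fun s hs =>
          hm ▸ mgf_sum_truncateAbs_le hmeas hindep hident hb.le hmom hn hy0 hyb hyq hs.le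
    _ = _ := by ring_nf
end
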